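/- arXiv:2007.07127 — 3 statements merged into one kernel-verified Lean document; each statement's English description precedes it below -/
import Mathlib

section
/- (Non-identifiability of the treatment effect, moment form; Proposition 5.1) Assume α ≠ 0. Then there exist real parameters α', β', τ' and positive reals σ_U'², σ_T'², σ_Y'² with β' ≠ β such that all three second moments match: α'²σ_U'² + σ_T'² = α²σ_U² + σ_T², β'(α'²σ_U'² + σ_T'²) + τ'α'σ_U'² = β(α²σ_U² + σ_T²) + τασ_U², and β'²(α'²σ_U'² + σ_T'²) + 2β'τ'α'σ_U'² + τ'²σ_U'² + σ_Y'² = β²(α²σ_U² + σ_T²) + 2βτασ_U² + τ²σ_U² + σ_Y². -/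
/-!
Keep `α`, `σ_U²`, `σ_T²`, hence `Var T = S`, fixed. Moving `τ` to `τ'` and `β` to
`β + (τ - τ') α σ_U² / S` leaves `Cov(T, Y)` unchanged, and
`S · Var Y = Cov(T, Y)² + τ² σ_U² σ_T² + σ_Y² S`, so `Var Y` is matched by absorbing
`(τ² - τ'²) σ_U² σ_T² / S` into `σ_Y²`; this stays positive for every `τ'` close enough to `τ`.
-/

theorem Real.exists_ne_sq_lt {t K : ℝ} (h : t ^ 2 < K) : ∃ s, s ≠ t ∧ s ^ 2 < K := by
  have hK : 0 ≤ K := (sq_nonneg t).trans h.le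
  have ht : |t| < √K := (Real.lt_sqrt (abs_nonneg t)).2 (by rwa [sq_abs])
  obtain ⟨ht_lower, ht_upper⟩ := abs_lt.1 ht
  refine ⟨(t + √K) / 2, by linarith, ?_⟩
  calc ((t + √K) / 2) ^ 2 < √K ^ 2 := sq_lt_sq' (by linarith) (by linarith)
    _ = K := Real.sq_sqrt hK

namespace LinearSLC

variable (α β τ σU2 σT2 σY2 : ℝ)

def varT : ℝ := α ^ 2 * σU2 + σT2

def covTY : ℝ := β * varT α σU2 σT2 + τ * α * σU2

def varY : ℝ := β ^ 2 * varT α σU2 σT2 + 2 * β * τ * α * σU2 + τ ^ 2 * σU2 + σY2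

theorem varT_pos {α σU2 σT2 : ℝ} (hσU : 0 < σU2) (hσT : 0 < σT2) : 0 < varT α σU2 σT2 := by
  unfold varT
  positivity

theorem varT_mul_varY :
    varT α σU2 σT2 * varY α β τ σU2 σT2 σY2
      = covTY α β τ σU2 σT2 ^ 2 + τ ^ 2 * σU2 * σT2 + σY2 * varT α σU2 σT2 := by
  unfold varY covTY varT
  ring

theorem varY_eq_of_covTY_eq {α β τ β' τ' σU2 σT2 σY2 σY2' : ℝ} (hS : 0 < varT α σU2 σT2)
    (hcov : covTY α β' τ' σU2 σT2 = covTY α β τ σU2 σT2)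
    (hres : τ' ^ 2 * σU2 * σT2 + σY2' * varT α σU2 σT2
      = τ ^ 2 * σU2 * σT2 + σY2 * varT α σU2 σT2) :
    varY α β' τ' σU2 σT2 σY2' = varY α β τ σU2 σT2 σY2 := by
  apply mul_left_cancel₀ hS.ne'
  rw [varT_mul_varY, varT_mul_varY, hcov, add_assoc, hres, ← add_assoc]

end LinearSLC

open LinearSLC in
/-- **Proposition 5.1, moment form.** Non-identifiability of the
treatment effect: if `α ≠ 0`, there is an alternative parameter vector with a
different treatment effect `β' ≠ β` that matches all three second moments of `(T, Y)`. -/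
theorem treatment_effect_nonidentifiable_moments
    (α β τ : ℝ) (σU2 σT2 σY2 : ℝ)
    (hσU : 0 < σU2) (hσT : 0 < σT2) (hσY : 0 < σY2)
    (hα : α ≠ 0) :
    ∃ (α' β' τ' σU2' σT2' σY2' : ℝ),
      0 < σU2' ∧ 0 < σT2' ∧ 0 < σY2' ∧ β' ≠ β ∧
      α' ^ 2 * σU2' + σT2' = α ^ 2 * σU2 + σT2 ∧
      β' * (α' ^ 2 * σU2' + σT2') + τ' * α' * σU2'
        = β * (α ^ 2 * σU2 + σT2) + τ * α * σU2 ∧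
      β' ^ 2 * (α' ^ 2 * σU2' + σT2') + 2 * β' * τ' * α' * σU2' + τ' ^ 2 * σU2' + σY2'
        = β ^ 2 * (α ^ 2 * σU2 + σT2) + 2 * β * τ * α * σU2 + τ ^ 2 * σU2 + σY2 := by
  set S := varT α σU2 σT2 with hS_def
  have hS : 0 < S := varT_pos hσU hσT
  set K := τ ^ 2 + σY2 * S / (σU2 * σT2)
  obtain ⟨τ', hτ'_ne, hτ'_lt⟩ :=
    Real.exists_ne_sq_lt (t := τ) (K := K) (lt_add_of_pos_right _ (by positivity))
  set β' := β + (τ - τ') * α * σU2 / S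
  have hcov : covTY α β' τ' σU2 σT2 = covTY α β τ σU2 σT2 := by
    simp only [covTY, ← hS_def, β']
    field_simp
    ring
  refine ⟨α, β', τ', σU2, σT2, σU2 * σT2 * (K - τ' ^ 2) / S, hσU, hσT,
    by have := sub_pos.2 hτ'_lt; positivity, ?_, rfl, hcov, varY_eq_of_covTY_eq hS hcov ?_⟩
  · have : (τ - τ') * α * σU2 / S ≠ 0 := by
      have := sub_ne_zero.2 hτ'_ne.symm
      positivity
    simpa [β'] using this
  · simp only [← hS_def, K]
    field_simp
    ring
end

section
/- (Non-identifiability of the treatment effect, distributional form; Proposition 5.1) Assume α ≠ 0. For parameters (α, β, τ, σ_U², σ_T², σ_Y²), let μ(α, β, τ, σ_U², σ_T², σ_Y²) denote the pushforward to ℝ² of the product measure N(0, σ_U²) ⊗ N(0, σ_T²) ⊗ N(0, σ_Y²) under the map (u, e_t, e_y) ↦ (α·u + e_t, β·(α·u + e_t) + τ·u + e_y). Then there exist real parameters α', β', τ' and positive reals σ_U'², σ_T'², σ_Y'² with β' ≠ β such that μ(α, β, τ, σ_U², σ_T², σ_Y²) = μ(α', β', τ', σ_U'², σ_T'², σ_Y'²)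 as measures on ℝ². -/
open MeasureTheory ProbabilityTheory
open scoped NNReal

/-- The joint law of `(T, Y)` in the linear GP-SLC model with parameters
`(α, β, τ, σ_U², σ_T², σ_Y²)`: the pushforward to `ℝ²` of the product Gaussian
measure `N(0, σ_U²) ⊗ N(0, σ_T²) ⊗ N(0, σ_Y²)` under
`(u, e_t, e_y) ↦ (α·u + e_t, β·(α·u + e_t) + τ·u + e_y)`. -/
noncomputable def jointLaw (α β τ : ℝ) (σU2 σT2 σY2 : ℝ≥0) : Measure (ℝ × ℝ) :=
  Measure.map
    (fun p : ℝ × ℝ × ℝ =>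
      (α * p.1 + p.2.1, β * (α * p.1 + p.2.1) + τ * p.1 + p.2.2))
    ((gaussianReal 0 σU2).prod ((gaussianReal 0 σT2).prod (gaussianReal 0 σY2)))

/-!
The law of `(T, Y)` is a centred Gaussian measure on `ℝ²`; by its characteristic function it is
determined by `Var T`, `Cov(T, Y)` and `Var Y`. Keep `α`, `σ_U²`, `σ_T²` (hence `Var T`) and move
the treatment effect from `β` to `β - α s`: the covariance is restored by
`τ' = τ + s Var T / σ_U²`, and `Var Y` by the noise variance
`σ_Y² - 2 τ σ_T² s - Var T σ_T² / σ_U² s²`. That variance is `σ_Y² > 0` at `s = 0`, hence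
positive for some `s ≠ 0`.
-/

open Complex Filter Topology

lemma exists_ne_pos_of_continuousAt {X : Type*} [TopologicalSpace X] {f : X → ℝ} {x : X}
    [(𝓝[≠] x).NeBot] (hf : ContinuousAt f x) (hx : 0 < f x) : ∃ y ≠ x, 0 < f y := by
  have hpos : ∀ᶠ y in 𝓝[≠] x, 0 < f y := nhdsWithin_le_nhds (hf.eventually (lt_mem_nhds hx))
  obtain ⟨y, hy, hne⟩ := (hpos.and self_mem_nhdsWithin).exists
  exact ⟨y, hne, hy⟩

lemma ContinuousLinearMap.apply_prod_mk (L : StrongDual ℝ (ℝ × ℝ)) (x y : ℝ) :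
    L (x, y) = x * L (1, 0) + y * L (0, 1) := by
  rw [← smul_eq_mul, ← smul_eq_mul, ← map_smul, ← map_smul, ← map_add]
  simp

lemma charFunDual_gaussianReal_zero (v : ℝ≥0) (L : StrongDual ℝ ℝ) :
    charFunDual (gaussianReal 0 v) L = exp (-(v * L 1 ^ 2) / 2) := by
  rw [charFunDual_eq_charFun_map_one, gaussianReal_map_continuousLinearMap, charFun_gaussianReal]
  simp only [map_zero, NNReal.coe_mul, Real.coe_toNNReal _ (sq_nonneg _)]
  push_cast
  ring_nf

lemma charFunDual_gaussianReal_prod_prod (u t y : ℝ≥0) (L : StrongDual ℝ (ℝ × ℝ × ℝ)) :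
    charFunDual ((gaussianReal 0 u).prod ((gaussianReal 0 t).prod (gaussianReal 0 y))) L =
      exp (-(u * L (1, 0, 0) ^ 2 + t * L (0, 1, 0) ^ 2 + y * L (0, 0, 1) ^ 2) / 2) := by
  rw [charFunDual_prod, charFunDual_prod, charFunDual_gaussianReal_zero,
    charFunDual_gaussianReal_zero, charFunDual_gaussianReal_zero, ← exp_add, ← exp_add]
  simp only [ContinuousLinearMap.comp_apply, ContinuousLinearMap.inl_apply,
    ContinuousLinearMap.inr_apply, Prod.mk_zero_zero]
  ring_nf

noncomputable def treatmentOutcomeMap (α β τ : ℝ) : ℝ × ℝ × ℝ →L[ℝ] ℝ × ℝ :=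
  LinearMap.toContinuousLinearMap
    { toFun p := (α * p.1 + p.2.1, β * (α * p.1 + p.2.1) + τ * p.1 + p.2.2)
      map_add' p q := by ext <;> simp <;> ring
      map_smul' c p := by ext <;> simp <;> ring }

instance (α β τ : ℝ) (σU2 σT2 σY2 : ℝ≥0) :
    IsProbabilityMeasure (jointLaw α β τ σU2 σT2 σY2) :=
  Measure.isProbabilityMeasure_map (by fun_prop)

lemma charFunDual_jointLaw (α β τ : ℝ) (σU2 σT2 σY2 : ℝ≥0) (L : StrongDual ℝ (ℝ × ℝ)) :
    charFunDual (jointLaw α β τ σU2 σT2 σY2) L =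
      exp (-((σU2 * L (α, β * α + τ) ^ 2 + σT2 * L (1, β) ^ 2 + σY2 * L (0, 1) ^ 2 : ℝ) : ℂ)
        / 2) := by
  change charFunDual (Measure.map (treatmentOutcomeMap α β τ) _) L = _
  rw [charFunDual_map, charFunDual_gaussianReal_prod_prod]
  simp [treatmentOutcomeMap]

theorem jointLaw_eq_jointLaw_of_moments {α β τ α' β' τ' : ℝ}
    {σU2 σT2 σY2 σU2' σT2' σY2' : ℝ≥0}
    (hT : α ^ 2 * σU2 + σT2 = α' ^ 2 * σU2' + σT2')
    (hTY : α * (β * α + τ) * σU2 + β * σT2 = α' * (β' * α' + τ') * σU2' + β' * σT2')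
    (hY : (β * α + τ) ^ 2 * σU2 + β ^ 2 * σT2 + σY2 =
      (β' * α' + τ') ^ 2 * σU2' + β' ^ 2 * σT2' + σY2') :
    jointLaw α β τ σU2 σT2 σY2 = jointLaw α' β' τ' σU2' σT2' σY2' := by
  refine Measure.ext_of_charFunDual (funext fun L => ?_)
  rw [charFunDual_jointLaw, charFunDual_jointLaw]
  congr 4
  rw [L.apply_prod_mk α, L.apply_prod_mk 1 β, L.apply_prod_mk α', L.apply_prod_mk 1 β']
  linear_combination L (1, 0) ^ 2 * hT + 2 * L (1, 0) * L (0, 1) * hTY + L (0, 1) ^ 2 * hY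

noncomputable def shiftedOutcomeVar (α τ : ℝ) (σU2 σT2 σY2 : ℝ≥0) (s : ℝ) : ℝ :=
  σY2 - 2 * τ * σT2 * s - (α ^ 2 * σU2 + σT2) * σT2 / σU2 * s ^ 2

theorem jointLaw_eq_jointLaw_shift (α β τ s : ℝ) {σU2 σT2 σY2 : ℝ≥0} (hσU : 0 < σU2)
    (hs : 0 < shiftedOutcomeVar α τ σU2 σT2 σY2 s) :
    jointLaw α β τ σU2 σT2 σY2 =
      jointLaw α (β - α * s) (τ + s * (α ^ 2 * σU2 + σT2) / σU2) σU2 σT2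
        (shiftedOutcomeVar α τ σU2 σT2 σY2 s).toNNReal := by
  have hσU' : (σU2 : ℝ) ≠ 0 := by positivity
  apply jointLaw_eq_jointLaw_of_moments rfl
  · field_simp
    ring
  · rw [Real.coe_toNNReal _ hs.le, shiftedOutcomeVar]
    field_simp
    ring

/-- **Proposition 5.1, distributional form.** Non-identifiability of
the treatment effect: if `α ≠ 0`, there is an alternative parameter vector with
`β' ≠ β` inducing exactly the same joint law of `(T, Y)` on `ℝ²`. -/
theorem treatment_effect_nonidentifiable_law
    (α β τ : ℝ) (σU2 σT2 σY2 : ℝ≥0)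
    (hσU : 0 < σU2) (hσT : 0 < σT2) (hσY : 0 < σY2)
    (hα : α ≠ 0) :
    ∃ (α' β' τ' : ℝ) (σU2' σT2' σY2' : ℝ≥0),
      0 < σU2' ∧ 0 < σT2' ∧ 0 < σY2' ∧ β' ≠ β ∧
      jointLaw α β τ σU2 σT2 σY2 = jointLaw α' β' τ' σU2' σT2' σY2' := by
  obtain ⟨s, hs0, hs⟩ := exists_ne_pos_of_continuousAt (x := (0 : ℝ))
    (f := shiftedOutcomeVar α τ σU2 σT2 σY2)
    (by unfold shiftedOutcomeVar; fun_prop) (by simpa [shiftedOutcomeVar] using hσY)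
  exact ⟨_, _, _, _, _, _, hσU, hσT, Real.toNNReal_pos.mpr hs, by simp [hα, hs0],
    jointLaw_eq_jointLaw_shift α β τ s hσU hs⟩
end

section
/- (Covariance of centered treatment and centered outcome; step of Theorem 5.3) For every j ∈ {1,…,k}, Cov(T'_j, Y'_j) = β·Var(T'_j) = β·(1 − 1/k)·σ_T². -/
open MeasureTheory ProbabilityTheory
open scoped NNReal


/-- Covariance of two real-valued random variables. -/
noncomputable def covariance {Ω : Type*} [MeasurableSpace Ω] (μ : Measure Ω) (X Y : Ω → ℝ) : ℝ :=
  ∫ ω, (X ω - ∫ x, X x ∂μ) * (Y ω - ∫ x, Y x ∂μ) ∂μ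

/-!
Centering removes the confounder `U`: with `w` the `j`-th row of the centering matrix
`I - (1/k) 𝟙𝟙ᵀ`, one has `T'_j = ∑ wᵢ ε_{T,i}` and `Y'_j = β T'_j + ∑ wᵢ ε_{Y,i}`. The second sum
is independent of `T'_j`, so `Cov(T'_j, Y'_j) = β Var(T'_j)`, and by independence of the
`ε_{T,i}`, `Var(T'_j) = σ_T² ∑ wᵢ² = (1 - 1/k) σ_T²`.
-/

section Centering

variable {ι : Type*} [Fintype ι] [DecidableEq ι]

-- Row `j` of the centering matrix `I - (1/n) 𝟙𝟙ᵀ`, `n = card ι`.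
noncomputable def centeringWeight (j i : ι) : ℝ :=
  (if i = j then 1 else 0) - 1 / Fintype.card ι

lemma sub_mean_eq_sum_centeringWeight {x e : ι → ℝ} {c : ℝ} (h : ∀ l, x l = e l + c) (j : ι) :
    x j - 1 / Fintype.card ι * ∑ l, x l = ∑ i, centeringWeight j i * e i := by
  have hcard : (Fintype.card ι : ℝ) ≠ 0 := by
    have : Nonempty ι := ⟨j⟩
    positivity
  simp only [h, centeringWeight, sub_mul, ite_mul, one_mul, zero_mul, Finset.sum_sub_distrib,
    Finset.sum_ite_eq', Finset.mem_univ, if_true, ← Finset.mul_sum, Finset.sum_add_distrib,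
    Finset.sum_const, Finset.card_univ, nsmul_eq_mul]
  field_simp
  ring

lemma sum_centeringWeight_sq (j : ι) :
    ∑ i, centeringWeight j i ^ 2 = 1 - 1 / Fintype.card ι := by
  have hcard : (Fintype.card ι : ℝ) ≠ 0 := by
    have : Nonempty ι := ⟨j⟩
    positivity
  have hsq : ∀ i, centeringWeight j i ^ 2
      = (if i = j then 1 else 0) * (1 - 2 / Fintype.card ι) + 1 / (Fintype.card ι : ℝ) ^ 2 := by
    intro i
    by_cases h : i = j <;> simp only [centeringWeight, h, if_true, if_false] <;> ring
  simp only [hsq, Finset.sum_add_distrib, ← Finset.sum_mul, Finset.sum_ite_eq', Finset.mem_univ,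
    if_true, Finset.sum_const, Finset.card_univ, nsmul_eq_mul]
  field_simp
  ring

end Centering

section Moments

variable {Ω ι κ : Type*} [MeasurableSpace Ω] {P : Measure Ω}

lemma memLp_two_of_map_eq_gaussianReal {X : Ω → ℝ} {m : ℝ} {v : ℝ≥0}
    (h : P.map X = gaussianReal m v) : MemLp X 2 P :=
  have : IsGaussian (P.map X) := h ▸ inferInstance
  IsGaussian.hasGaussianLaw.memLp_two

lemma variance_of_map_eq_gaussianReal {X : Ω → ℝ} {m : ℝ} {v : ℝ≥0}
    (h : P.map X = gaussianReal m v) : Var[X; P] = v :=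
  have hX : AEMeasurable X P := .of_map_ne_zero (h ▸ IsProbabilityMeasure.ne_zero _)
  (HasLaw.variance_eq ⟨hX, h⟩).trans variance_id_gaussianReal

lemma variance_sum_const_mul_of_pairwise_indepFun [Fintype ι] {X : ι → Ω → ℝ} (a : ι → ℝ)
    (hX : ∀ i, MemLp (X i) 2 P) (hindep : Pairwise fun i l => X i ⟂ᵢ[P] X l) {v : ℝ}
    (hv : ∀ i, Var[X i; P] = v) :
    Var[fun ω => ∑ i, a i * X i ω; P] = (∑ i, a i ^ 2) * v := by
  have hsum : (fun ω => ∑ i, a i * X i ω) = ∑ i, fun ω => a i * X i ω := by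
    ext ω; simp
  rw [hsum, IndepFun.variance_sum (fun i _ => (hX i).const_mul (a i))
    (fun i _ l _ hil => (hindep hil).comp (measurable_const_mul (a i)) (measurable_const_mul (a l)))]
  simp only [variance_const_mul, hv, Finset.sum_mul]

lemma covariance_sum_const_mul_eq_zero_of_indepFun [IsFiniteMeasure P] [Fintype ι] [Fintype κ]
    {X : ι → Ω → ℝ} {Z : κ → Ω → ℝ} (a : ι → ℝ) (b : κ → ℝ) (hX : ∀ i, MemLp (X i) 2 P)
    (hZ : ∀ l, MemLp (Z l) 2 P) (hindep : ∀ i l, X i ⟂ᵢ[P] Z l) :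
    cov[fun ω => ∑ i, a i * X i ω, fun ω => ∑ l, b l * Z l ω; P] = 0 := by
  rw [covariance_fun_sum_fun_sum (fun i => (hX i).const_mul (a i))
    (fun l => (hZ l).const_mul (b l))]
  simp [covariance_const_mul_left, covariance_const_mul_right,
    (hindep _ _).covariance_eq_zero (hX _) (hZ _)]

end Moments

theorem centered_covariance_general
    {Ω : Type*} [MeasureSpace Ω] [IsProbabilityMeasure (ℙ : Measure Ω)]
    (k : ℕ) (α β τ : ℝ) (σT2 σY2 : ℝ≥0)
    (U : Ω → ℝ) (εT εY : Fin k → Ω → ℝ)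
    (hIndep : iIndepFun
      (Sum.elim (fun _ : Unit => U) (Sum.elim εT εY)) ℙ)
    (hεT : ∀ j, Measure.map (εT j) ℙ = gaussianReal 0 σT2)
    (hεY : ∀ j, Measure.map (εY j) ℙ = gaussianReal 0 σY2)
    (T Y Tc Yc : Fin k → Ω → ℝ)
    (hT : ∀ j ω, T j ω = α * U ω + εT j ω)
    (hY : ∀ j ω, Y j ω = β * T j ω + τ * U ω + εY j ω)
    (hTc : ∀ j ω, Tc j ω = T j ω - (1 / (k : ℝ)) * ∑ l, T l ω)
    (hYc : ∀ j ω, Yc j ω = Y j ω - (1 / (k : ℝ)) * ∑ l, Y l ω) :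
    ∀ j, covariance ℙ (Tc j) (Yc j) = β * variance (Tc j) ℙ ∧
      covariance ℙ (Tc j) (Yc j) = β * ((1 - 1 / (k : ℝ)) * (σT2 : ℝ)) := by
  intro j
  have hTc_eq : Tc j = fun ω => ∑ i, centeringWeight j i * εT i ω := funext fun ω => by
    have h := sub_mean_eq_sum_centeringWeight (fun l => by rw [hT]; ring :
      ∀ l, T l ω = εT l ω + α * U ω) j
    rwa [Fintype.card_fin, ← hTc] at h
  have hYc_eq : Yc j = (fun ω => β * Tc j ω) + fun ω => ∑ i, centeringWeight j i * εY i ω :=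
    funext fun ω => by
      have h := sub_mean_eq_sum_centeringWeight (fun l => by rw [hY, hT]; ring :
        ∀ l, Y l ω = (β * εT l ω + εY l ω) + (β * α + τ) * U ω) j
      rw [Fintype.card_fin, ← hYc] at h
      simp only [h, hTc_eq, Pi.add_apply, mul_add, Finset.sum_add_distrib, Finset.mul_sum,
        mul_left_comm β]
  have hT2 i := memLp_two_of_map_eq_gaussianReal (hεT i)
  have hY2 i := memLp_two_of_map_eq_gaussianReal (hεY i)
  have hTc2 : MemLp (Tc j) 2 ℙ := hTc_eq ▸ memLp_finsetSum _ fun i _ => (hT2 i).const_mul _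
  have hindepT : Pairwise fun i l => εT i ⟂ᵢ[ℙ] εT l := fun i l hil =>
    hIndep.indepFun (i := .inr (.inl i)) (j := .inr (.inl l)) (by simpa using hil)
  have hindepTY : ∀ i l, εT i ⟂ᵢ[ℙ] εY l := fun i l =>
    hIndep.indepFun (i := .inr (.inl i)) (j := .inr (.inr l)) (by simp)
  have hvar : Var[Tc j; ℙ] = (1 - 1 / (k : ℝ)) * σT2 := by
    rw [hTc_eq, variance_sum_const_mul_of_pairwise_indepFun _ hT2 hindepT
      (fun i => variance_of_map_eq_gaussianReal (hεT i)), sum_centeringWeight_sq, Fintype.card_fin]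
  have hcov : cov[Tc j, Yc j; ℙ] = β * Var[Tc j; ℙ] := by
    have hεY2 : MemLp (fun ω => ∑ i, centeringWeight j i * εY i ω) 2 ℙ :=
      memLp_finsetSum _ fun i _ => (hY2 i).const_mul _
    rw [hYc_eq, covariance_add_right hTc2 (hTc2.const_mul β) hεY2, covariance_const_mul_right,
      covariance_self hTc2.aemeasurable, hTc_eq,
      covariance_sum_const_mul_eq_zero_of_indepFun _ _ hT2 hY2 hindepTY, add_zero]
  exact ⟨hcov, hcov.trans (by rw [hvar])⟩

/-- **step of Theorem 5.3.** The covariance of the centered treatment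
and centered outcome satisfies `Cov(T'_j, Y'_j) = β·Var(T'_j) = β·(1 − 1/k)·σ_T²`. -/
theorem centered_covariance
    {Ω : Type*} [MeasureSpace Ω] [IsProbabilityMeasure (ℙ : Measure Ω)]
    (k : ℕ) (hk : 2 ≤ k) (α β τ : ℝ) (σU2 σT2 σY2 : ℝ≥0)
    (hσU : 0 < σU2) (hσT : 0 < σT2) (hσY : 0 < σY2)
    (U : Ω → ℝ) (εT εY : Fin k → Ω → ℝ)
    (hmU : Measurable U) (hmεT : ∀ j, Measurable (εT j)) (hmεY : ∀ j, Measurable (εY j))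
    (hIndep : iIndepFun
      (Sum.elim (fun _ : Unit => U) (Sum.elim εT εY)) ℙ)
    (hU : Measure.map U ℙ = gaussianReal 0 σU2)
    (hεT : ∀ j, Measure.map (εT j) ℙ = gaussianReal 0 σT2)
    (hεY : ∀ j, Measure.map (εY j) ℙ = gaussianReal 0 σY2)
    (T Y Tc Yc : Fin k → Ω → ℝ)
    (hT : ∀ j ω, T j ω = α * U ω + εT j ω)
    (hY : ∀ j ω, Y j ω = β * T j ω + τ * U ω + εY j ω)
    (hTc : ∀ j ω, Tc j ω = T j ω - (1 / (k : ℝ)) * ∑ l, T l ω)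
    (hYc : ∀ j ω, Yc j ω = Y j ω - (1 / (k : ℝ)) * ∑ l, Y l ω) :
    ∀ j, covariance ℙ (Tc j) (Yc j) = β * variance (Tc j) ℙ ∧
      covariance ℙ (Tc j) (Yc j) = β * ((1 - 1 / (k : ℝ)) * (σT2 : ℝ)) :=
  centered_covariance_general k α β τ σT2 σY2 U εT εY hIndep hεT hεY T Y Tc Yc hT hY hTc hYc
end
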